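/- arXiv:2311.10593 — 5 statements merged into one kernel-verified Lean document; each statement's English description precedes it below -/
import Mathlib

section
/- For every (possibly disconnected) finite simple graph G, k(G) ≤ p(G). -/
/- Definitions following "Generation and New Infinite Families of K₂-hypohamiltonian Graphs"
by Goedgebeur, Renders and Zamfirescu. -/

open scoped Classical

noncomputable section

namespace K2HypoPaper

variable {V : Type}

/-- A graph is *hamiltonian* if it contains a cycle passing through every vertex exactly once. -/
def IsHamiltonianGraph (G : SimpleGraph V) : Prop :=
  ∃ (a : V) (p : G.Walk a a), p.IsHamiltonianCycle

/-- A graph is *K₂-hamiltonian* if deleting the two endpoints of any edge yields a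
hamiltonian graph. -/
def IsK2Hamiltonian (G : SimpleGraph V) : Prop :=
  ∀ u v : V, G.Adj u v → IsHamiltonianGraph (G.induce {x : V | x ≠ u ∧ x ≠ v})

/-- A graph is *hypohamiltonian* if it is non-hamiltonian and every vertex-deleted
subgraph is hamiltonian. -/
def IsHypohamiltonian (G : SimpleGraph V) : Prop :=
  ¬ IsHamiltonianGraph G ∧ ∀ v : V, IsHamiltonianGraph (G.induce {x : V | x ≠ v})

/-- A graph is *K₂-hypohamiltonian* if it is non-hamiltonian and K₂-hamiltonian. -/
def IsK2Hypohamiltonian (G : SimpleGraph V) : Prop :=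
  ¬ IsHamiltonianGraph G ∧ IsK2Hamiltonian G

/-- A family of `n` pairwise vertex-disjoint paths covering all the vertices of `G`. -/
def IsPathCover {n : ℕ} (G : SimpleGraph V) (P : Fin n → (u : V) × (v : V) × G.Walk u v) : Prop :=
  (∀ i, (P i).2.2.IsPath) ∧
  (∀ i j, i ≠ j → ∀ x, x ∈ (P i).2.2.support → x ∉ (P j).2.2.support) ∧
  (∀ x : V, ∃ i, x ∈ (P i).2.2.support)

/-- `p(G)`: the minimum number of pairwise vertex-disjoint paths needed to cover all
vertices of `G`. -/
def pathCoverNumber (G : SimpleGraph V) : ℕ :=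
  sInf {n : ℕ | ∃ P : Fin n → (u : V) × (v : V) × G.Walk u v, IsPathCover G P}

/-- The vertices lying in components of `G` that are isolated vertices or isolated `K₂`'s
(a component of a simple graph has at most two vertices iff it is an isolated vertex or an
isolated edge together with its endpoints). -/
def IVerts (G : SimpleGraph V) : Set V :=
  {v : V | (G.connectedComponentMk v).supp.ncard ≤ 2}

/-- `|I(G)|`: the number of components of `G` that are isolated vertices or isolated `K₂`'s. -/
def numIComponents (G : SimpleGraph V) : ℕ :=
  {c : G.ConnectedComponent | c.supp.ncard ≤ 2}.ncard

/-- `|V₁(G)|`: the number of vertices of degree `1` in `G`. -/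
def degOneCount (G : SimpleGraph V) : ℕ :=
  {v : V | (G.neighborSet v).ncard = 1}.ncard

/-- Fuel-based implementation of the recursive definition of `k(G)`:
`k(G) = 0` if `G` is empty; `k(G) = max {1, ⌈|V₁(G)|/2⌉}` if `I(G) = ∅` but `G` is nonempty;
and `k(G) = |I(G)| + k(G − I(G))` otherwise. -/
def kAux : ℕ → (W : Type) → SimpleGraph W → ℕ
  | 0, _, _ => 0
  | (m + 1), W, G =>
    if IsEmpty W then 0
    else if IVerts G = ∅ then max 1 ((degOneCount G + 1) / 2)
    else numIComponents G + kAux m ↥((IVerts G)ᶜ) (G.induce ((IVerts G)ᶜ))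

/-- `k(G)` (the fuel `Fintype.card V` always suffices for the recursion to bottom out,
since removing the small components once leaves a graph with `I = ∅`). -/
def kNum [Fintype V] (G : SimpleGraph V) : ℕ := kAux (Fintype.card V) V G

/-!
Take a minimum path cover of `G`. Every path stays inside one component, so the paths meeting
`G − I(G)` form a path cover of it, while each component in `I(G)` contains a path of its own:
hence `|I(G)| + p(G − I(G)) ≤ p(G)`. A vertex of degree one can only be an end of the path
through it, so `|V₁(G)| ≤ 2 p(G)`, and `p(G) ≥ 1` when `G` is nonempty. These two bounds follow
the two recursive cases of `k`.
-/

open SimpleGraph Finset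

lemma exists_isPathCover_pathCoverNumber [Fintype V] (G : SimpleGraph V) :
    ∃ P : Fin (pathCoverNumber G) → (u : V) × (v : V) × G.Walk u v, IsPathCover G P := by
  let e := (Fintype.equivFin V).symm
  have hcover : IsPathCover G fun i => ⟨e i, e i, Walk.nil⟩ := by
    refine ⟨fun _ => Walk.IsPath.nil, ?_, fun x => ⟨e.symm x, by simp⟩⟩
    intro i j hij x hxi hxj
    simp only [Walk.support_nil, List.mem_singleton] at hxi hxj
    exact hij (e.injective (hxi ▸ hxj))
  exact Nat.sInf_mem (s := {n | ∃ P : Fin n → (u : V) × (v : V) × G.Walk u v, IsPathCover G P})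
    ⟨_, _, hcover⟩

lemma pathCoverNumber_le {G : SimpleGraph V} {n : ℕ}
    {P : Fin n → (u : V) × (v : V) × G.Walk u v} (hP : IsPathCover G P) :
    pathCoverNumber G ≤ n :=
  Nat.sInf_le ⟨P, hP⟩

lemma one_le_pathCoverNumber [Fintype V] [Nonempty V] (G : SimpleGraph V) :
    1 ≤ pathCoverNumber G := by
  obtain ⟨P, hP⟩ := exists_isPathCover_pathCoverNumber G
  obtain ⟨i, -⟩ := hP.2.2 (Classical.arbitrary V)
  exact i.pos

lemma eq_or_eq_of_mem_support_of_subsingleton_neighborSet {G : SimpleGraph V} {a b x : V}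
    {w : G.Walk a b} (hw : w.IsPath) (hx : x ∈ w.support)
    (hdeg : (G.neighborSet x).Subsingleton) : x = a ∨ x = b := by
  induction w with
  | nil => exact .inl (List.mem_singleton.mp hx)
  | @cons u c b huc p ih =>
    rcases List.mem_cons.mp hx with rfl | hxp
    · exact .inl rfl
    rcases ih hw.of_cons hxp with rfl | rfl
    · cases p with
      | nil => exact .inr rfl
      | @cons _ d _ hxd p' =>
        -- an interior `x` has the two neighbours `u` and `d`, distinct on a path
        have hud : u = d := hdeg huc.symm hxd
        have hu : u ∈ (Walk.cons hxd p').support := by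
          rw [hud]; exact List.mem_cons_of_mem _ p'.start_mem_support
        exact absurd hu ((Walk.cons_isPath_iff _ _).mp hw).2
    · exact .inr rfl

lemma degOneCount_le_two_mul_pathCoverNumber [Fintype V] (G : SimpleGraph V) :
    degOneCount G ≤ 2 * pathCoverNumber G := by
  obtain ⟨P, hP⟩ := exists_isPathCover_pathCoverNumber G
  have hends : {v : V | (G.neighborSet v).ncard = 1} ⊆
      ↑(univ.image (fun i => (P i).1) ∪ univ.image (fun i => (P i).2.1)) := by
    intro v hv
    obtain ⟨i, hi⟩ := hP.2.2 v
    obtain ⟨y, hy⟩ := Set.ncard_eq_one.mp hv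
    have hsub : (G.neighborSet v).Subsingleton := hy ▸ Set.subsingleton_singleton
    rcases eq_or_eq_of_mem_support_of_subsingleton_neighborSet (hP.1 i) hi hsub with rfl | rfl
      <;> simp
  calc degOneCount G
      ≤ (univ.image (fun i => (P i).1) ∪ univ.image (fun i => (P i).2.1)).card := by
        rw [← Set.ncard_coe_finset]
        exact Set.ncard_le_ncard hends
    _ ≤ (univ.image (fun i => (P i).1)).card + (univ.image (fun i => (P i).2.1)).card :=
        card_union_le _ _
    _ ≤ #(univ : Finset (Fin (pathCoverNumber G))) + #univ :=
        add_le_add card_image_le card_image_le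
    _ = 2 * pathCoverNumber G := by simp [two_mul]

lemma ncard_le_card_filter_connectedComponentMk_mem {G : SimpleGraph V} {n : ℕ}
    {P : Fin n → (u : V) × (v : V) × G.Walk u v} (hP : IsPathCover G P)
    (S : Set G.ConnectedComponent) :
    S.ncard ≤ #{i | G.connectedComponentMk (P i).1 ∈ S} := by
  have hsurj : S ⊆ ↑(({i | G.connectedComponentMk (P i).1 ∈ S} : Finset (Fin n)).image
      fun i => G.connectedComponentMk (P i).1) := by
    intro c hc
    induction c using ConnectedComponent.ind with
    | h v =>
      obtain ⟨i, hi⟩ := hP.2.2 v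
      have hcomp : G.connectedComponentMk (P i).1 = G.connectedComponentMk v :=
        ConnectedComponent.sound ⟨(P i).2.2.takeUntil v hi⟩
      simp only [coe_image, coe_filter, mem_univ, true_and, Set.mem_image, Set.mem_ofPred_eq]
      exact ⟨i, hcomp ▸ hc, hcomp⟩
  calc S.ncard ≤ _ := Set.ncard_le_ncard hsurj
    _ ≤ _ := by rw [Set.ncard_coe_finset]; exact card_image_le

lemma pathCoverNumber_induce_le_card_filter {G : SimpleGraph V} {n : ℕ}
    {P : Fin n → (u : V) × (v : V) × G.Walk u v} (hP : IsPathCover G P) {s : Set V}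
    (hs : ∀ ⦃u v⦄, G.Reachable u v → u ∈ s → v ∈ s) :
    pathCoverNumber (G.induce s) ≤ #{i | (P i).1 ∈ s} := by
  set C : Finset (Fin n) := {i | (P i).1 ∈ s}
  have hreach (i : Fin n) {x : V} (hx : x ∈ (P i).2.2.support) : G.Reachable (P i).1 x :=
    ⟨(P i).2.2.takeUntil x hx⟩
  have hsupp (i : C) : ∀ x ∈ (P i).2.2.support, x ∈ s := fun x hx =>
    hs (hreach i hx) (mem_filter.mp i.2).2
  have mem_support_induce (i : C) (x : s) :
      x ∈ ((P i).2.2.induce s (hsupp i)).support ↔ x.1 ∈ (P i).2.2.support := by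
    simp [Walk.support_induce]
  let e := C.equivFin.symm
  refine pathCoverNumber_le (P := fun j => ⟨_, _, (P (e j)).2.2.induce s (hsupp (e j))⟩)
    ⟨fun j => ?_, fun j j' hjj' x hxj hxj' => ?_, fun x => ?_⟩
  · refine Walk.IsPath.of_map (f := (Embedding.induce s).toHom) ?_
    rw [Walk.map_induce]
    exact hP.1 _
  · rw [mem_support_induce] at hxj hxj'
    exact hP.2.1 _ _ (fun h => hjj' (e.injective (Subtype.ext h))) _ hxj hxj'
  · obtain ⟨i, hi⟩ := hP.2.2 x.1
    have hiC : i ∈ C := mem_filter.mpr ⟨mem_univ _, hs (hreach i hi).symm x.2⟩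
    refine ⟨e.symm ⟨i, hiC⟩, ?_⟩
    rw [mem_support_induce, Equiv.apply_symm_apply]
    exact hi

lemma mem_IVerts_iff_of_reachable {G : SimpleGraph V} {u v : V} (h : G.Reachable u v) :
    u ∈ IVerts G ↔ v ∈ IVerts G := by
  simp only [IVerts, Set.mem_ofPred_eq, ConnectedComponent.eq.mpr h]

lemma numIComponents_add_pathCoverNumber_induce_le [Fintype V] (G : SimpleGraph V) :
    numIComponents G + pathCoverNumber (G.induce (IVerts G)ᶜ) ≤ pathCoverNumber G := by
  obtain ⟨P, hP⟩ := exists_isPathCover_pathCoverNumber G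
  have hI : numIComponents G ≤ #{i | (P i).1 ∈ IVerts G} :=
    ncard_le_card_filter_connectedComponentMk_mem hP {c | c.supp.ncard ≤ 2}
  have hrest : pathCoverNumber (G.induce (IVerts G)ᶜ) ≤ #{i | (P i).1 ∉ IVerts G} := by
    simpa only [Set.mem_compl_iff] using pathCoverNumber_induce_le_card_filter hP
      (s := (IVerts G)ᶜ) fun _ _ h => (mem_IVerts_iff_of_reachable h).not.mp
  have hsplit := card_filter_add_card_filter_not (s := univ) fun i => (P i).1 ∈ IVerts G
  rw [card_univ, Fintype.card_fin] at hsplit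
  omega

lemma kAux_le_pathCoverNumber (m : ℕ) :
    ∀ (W : Type) [Fintype W] (G : SimpleGraph W), kAux m W G ≤ pathCoverNumber G := by
  induction m with
  | zero => intro W _ G; exact Nat.zero_le _
  | succ m ih =>
    intro W _ G
    rw [kAux]
    split_ifs with hW hI
    · exact Nat.zero_le _
    · have : Nonempty W := not_isEmpty_iff.mp hW
      have := degOneCount_le_two_mul_pathCoverNumber G
      have := one_le_pathCoverNumber G
      omega
    · exact (Nat.add_le_add_left (ih _ _) _).trans
        (numIComponents_add_pathCoverNumber_induce_le G)

/-- For every finite simple graph `G`, `k(G) ≤ p(G)`. -/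
theorem kNum_le_pathCoverNumber (V : Type) [Fintype V] (G : SimpleGraph V) :
    kNum G ≤ pathCoverNumber G :=
  kAux_le_pathCoverNumber _ V G

end K2HypoPaper
end
end

section
/- Let G be a connected K₂-hamiltonian finite simple graph and (W,X) a non-trivial partition of V(G) with |X| > 1 such that the induced subgraph G[X] contains no two adjacent vertices. Then p(G[W]) < |X| + 1. -/
/- Definitions following "Generation and New Infinite Families of K₂-hypohamiltonian Graphs"
by Goedgebeur, Renders and Zamfirescu. -/

open scoped Classical

noncomputable section

/-! Pick `x ∈ X` and a neighbour `w` of `x`, which lies in `W` because `X` is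
independent. A hamiltonian cycle of `G - x - w`, opened at a second vertex `x' ∈ X`, is a path
through all vertices but `x` and `w` that starts outside `W`. Deleting its vertices in `X` (at
most `|X| - 1` of them) cuts it into at most `|X| - 1` paths of `G[W]`, because the first
deleted vertex is the start of the path; the one-vertex path `w` completes a cover by at most
`|X|` paths. -/

namespace List

variable {α : Type*} {r : α → α → Prop}

theorem exists_isChain_flatten_eq_filter (p : α → Bool) :
    ∀ {L : List α}, L.IsChain r → ∃ Ls : List (List α),
      (∀ l ∈ Ls, l ≠ [] ∧ l.IsChain r) ∧ Ls.flatten = L.filter p ∧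
      Ls.length ≤ L.countP (fun a => !p a) + 1
  | [], _ => ⟨[], by simp⟩
  | [a], _ => by
    by_cases ha : p a
    · exact ⟨[[a]], by simp, by simp [ha], by simp⟩
    · exact ⟨[], by simp, by simp [ha], by simp⟩
  | a :: b :: L, h => by
    obtain ⟨hab, hbL⟩ := isChain_cons_cons.1 h
    by_cases ha : p a
    · by_cases hb : p b
      · obtain ⟨Ls, hLs, hflat, hlen⟩ := exists_isChain_flatten_eq_filter p hbL
        obtain _ | ⟨_ | ⟨c, l⟩, Ls⟩ := Ls
        · simp [hb] at hflat
        · simp at hLs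
        obtain rfl : b = c := by
          simp only [flatten_cons, cons_append, hb, filter_cons_of_pos, cons.injEq] at hflat
          exact hflat.1.symm
        refine ⟨(a :: b :: l) :: Ls, ?_, ?_, ?_⟩
        · simp only [mem_cons, forall_eq_or_imp] at hLs ⊢
          exact ⟨⟨by simp, isChain_cons_cons.2 ⟨hab, hLs.1.2⟩⟩, hLs.2⟩
        · simp_all
        · simp_all
      · obtain ⟨Ls, hLs, hflat, hlen⟩ := exists_isChain_flatten_eq_filter p hbL.tail
        refine ⟨[a] :: Ls, ?_, ?_, ?_⟩
        · simpa using hLs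
        · simp [ha, hb, hflat]
        · simp_all
    · obtain ⟨Ls, hLs, hflat, hlen⟩ := exists_isChain_flatten_eq_filter p hbL
      refine ⟨Ls, hLs, by simp [ha, hflat], ?_⟩
      rw [countP_cons_of_pos (by simpa using ha)]
      omega

theorem exists_isChain_flatten_eq_filter_of_not_head (p : α → Bool) {a : α} {L : List α}
    (h : (a :: L).IsChain r) (ha : p a = false) : ∃ Ls : List (List α),
      (∀ l ∈ Ls, l ≠ [] ∧ l.IsChain r) ∧ Ls.flatten = (a :: L).filter p ∧
      Ls.length ≤ (a :: L).countP (fun a => !p a) := by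
  obtain ⟨Ls, hLs, hflat, hlen⟩ := exists_isChain_flatten_eq_filter p h.tail
  exact ⟨Ls, hLs, by simp [ha, hflat], by simpa [ha] using hlen⟩

theorem Nodup.length_le_ncard {s : Set α} {l : List α} (hl : l.Nodup) (hls : ∀ a ∈ l, a ∈ s)
    (hs : s.Finite) : l.length ≤ s.ncard := by
  rw [← toFinset_card_of_nodup hl, ← Set.ncard_coe_finset]
  exact Set.ncard_le_ncard (by simpa [Set.subset_def] using hls) hs

end List

namespace SimpleGraph.Walk

variable {α : Type*} [DecidableEq α] {G : SimpleGraph α} {u v : α}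

theorem IsHamiltonian.reverse {p : G.Walk u v} (hp : p.IsHamiltonian) : p.reverse.IsHamiltonian :=
  fun a => by simpa [support_reverse] using hp a

theorem IsHamiltonianCycle.exists_isHamiltonian_from {p : G.Walk u u} (hp : p.IsHamiltonianCycle)
    (b : α) : ∃ v, ∃ q : G.Walk b v, q.IsHamiltonian :=
  ⟨_, _, (hp.rotate (hp.mem_support b)).isHamiltonian_tail.reverse⟩

end SimpleGraph.Walk

namespace K2HypoPaper

variable {V : Type}

theorem pathCoverNumber_le_of_lists (H : SimpleGraph V) (Ls : List (List V))
    (hLs : ∀ l ∈ Ls, l ≠ [] ∧ l.IsChain H.Adj) (hnd : Ls.flatten.Nodup)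
    (hcov : ∀ x, x ∈ Ls.flatten) : pathCoverNumber H ≤ Ls.length := by
  obtain ⟨hnd, hdisj⟩ := List.nodup_flatten.1 hnd
  let P : Fin Ls.length → (u : V) × (v : V) × H.Walk u v := fun i =>
    let h := hLs _ (Ls.get_mem i)
    ⟨_, _, SimpleGraph.Walk.ofSupport _ h.1 h.2⟩
  have hP : ∀ i, (P i).2.2.support = Ls.get i := fun i => SimpleGraph.Walk.support_ofSupport ..
  refine Nat.sInf_le ⟨P, fun i => ?_, fun i j hij x hx => ?_, fun x => ?_⟩
  · exact SimpleGraph.Walk.IsPath.mk' (by rw [hP]; exact hnd _ (Ls.get_mem i))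
  · rw [hP] at hx ⊢
    rcases lt_or_gt_of_ne hij with h | h
    · exact List.pairwise_iff_get.1 hdisj i j h hx
    · exact fun hx' => List.pairwise_iff_get.1 hdisj j i h hx' hx
  · obtain ⟨l, hl, hxl⟩ := List.mem_flatten.1 (hcov x)
    obtain ⟨i, rfl⟩ := List.mem_iff_get.1 hl
    exact ⟨i, by rwa [hP]⟩

theorem pathCoverNumber_induce_le_of_lists (G : SimpleGraph V) (W : Set V)
    (Ls : List (List V)) (hLs : ∀ l ∈ Ls, l ≠ [] ∧ l.IsChain G.Adj) (hnd : Ls.flatten.Nodup)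
    (hmem : ∀ x, x ∈ Ls.flatten ↔ x ∈ W) : pathCoverNumber (G.induce W) ≤ Ls.length := by
  have hW : ∀ l ∈ Ls, ∀ x ∈ l, x ∈ W := fun l hl x hx =>
    (hmem x).1 (List.mem_flatten.2 ⟨l, hl, hx⟩)
  let Ls' := Ls.pmap (fun l hl => l.attachWith (· ∈ W) hl) hW
  have hval : Ls'.flatten.map Subtype.val = Ls.flatten := by
    simp [Ls', List.map_flatten, List.map_pmap]
  calc pathCoverNumber (G.induce W) ≤ Ls'.length := by
        refine pathCoverNumber_le_of_lists _ Ls' ?_ ?_ fun x => ?_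
        · simp only [Ls', List.mem_pmap]
          rintro _ ⟨l, hl, rfl⟩
          refine ⟨by simpa using (hLs l hl).1, (List.isChain_attachWith _).2 ?_⟩
          exact (hLs l hl).2.imp_of_mem_imp fun a b ha hb hab =>
            ⟨hW l hl a ha, hW l hl b hb, hab⟩
        · exact List.Nodup.of_map _ (hval ▸ hnd)
        · have : x.1 ∈ Ls'.flatten.map Subtype.val := hval ▸ (hmem x).2 x.2
          simpa using this
    _ = Ls.length := List.length_pmap

theorem pathCoverNumber_induce_le_countP_add_one (G : SimpleGraph V) {W : Set V}
    {a w : V} {L : List V} (hchain : (a :: L).IsChain G.Adj) (hnd : (a :: L).Nodup) (ha : a ∉ W)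
    (hw : w ∈ W) (hwL : w ∉ a :: L) (hW : ∀ v ∈ W, v ≠ w → v ∈ a :: L) :
    pathCoverNumber (G.induce W) ≤ (a :: L).countP (fun v => v ∉ W) + 1 := by
  obtain ⟨Ls, hLs, hflat, hlen⟩ :=
    List.exists_isChain_flatten_eq_filter_of_not_head (fun v => v ∈ W) hchain (by simpa using ha)
  calc pathCoverNumber (G.induce W) ≤ ([w] :: Ls).length := by
        refine pathCoverNumber_induce_le_of_lists G W _ ?_ ?_ fun v => ?_
        · simpa using hLs
        · rw [List.flatten_cons, List.singleton_append, hflat]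
          exact List.nodup_cons.2 ⟨fun h => hwL (List.mem_of_mem_filter h), hnd.filter _⟩
        · simp only [List.flatten_cons, List.singleton_append, hflat, List.mem_cons,
            List.mem_filter, decide_eq_true_eq]
          grind
    _ ≤ (a :: L).countP (fun v => v ∉ W) + 1 := by simpa using hlen

theorem IsHamiltonianGraph.exists_isChain_nodup_of_induce {G : SimpleGraph V} {S : Set V}
    (h : IsHamiltonianGraph (G.induce S)) {b : V} (hb : b ∈ S) :
    ∃ L : List V, (b :: L).IsChain G.Adj ∧ (b :: L).Nodup ∧
      ∀ v, v ∈ b :: L ↔ v ∈ S := by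
  obtain ⟨_, p, hp⟩ := h
  -- `IsHamiltonianGraph` is stated with the classical `DecidableEq` instance on `S`
  have hp' : p.IsHamiltonianCycle := by convert hp
  obtain ⟨_, q, hq⟩ := hp'.exists_isHamiltonian_from ⟨b, hb⟩
  let q' := q.map (SimpleGraph.Embedding.induce S).toHom
  refine ⟨q'.support.tail, ?_⟩
  have hsupp : b :: q'.support.tail = q'.support := q'.cons_tail_support
  rw [hsupp]
  refine ⟨q'.isChain_adj_support, ?_, fun v => ?_⟩
  · exact (hq.isPath.map Subtype.val_injective).support_nodup
  · simp only [q', SimpleGraph.Walk.support_map, List.mem_map]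
    exact ⟨fun ⟨x, _, hx⟩ => hx ▸ x.2, fun hv => ⟨⟨v, hv⟩, hq.mem_support _, rfl⟩⟩

theorem nonAdj_pathCover_corollary_general (V : Type) (G : SimpleGraph V)
    (hconn : G.Connected) (hG : IsK2Hamiltonian G) (W X : Set V)
    (hdisj : Disjoint W X) (hunion : W ∪ X = Set.univ)
    (hWne : W.Nonempty) (hX1 : 1 < X.ncard)
    (hindep : ∀ v ∈ X, ∀ w ∈ X, ¬ G.Adj v w) :
    pathCoverNumber (G.induce W) < X.ncard + 1 := by
  have hX : ∀ v, v ∈ X ↔ v ∉ W := fun v =>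
    ⟨fun hvX hvW => hdisj.notMem_of_mem_left hvW hvX,
      fun hvW => ((hunion ▸ Set.mem_univ v : v ∈ W ∪ X)).resolve_left hvW⟩
  obtain ⟨⟨x, hx, x', hx', hxx'⟩, hXfin⟩ := Set.one_lt_ncard_iff_nontrivial_and_finite.1 hX1
  have : Nontrivial V := ⟨⟨x, hWne.some, fun h => (hX x).1 hx (h ▸ hWne.some_mem)⟩⟩
  obtain ⟨w, hxw⟩ := hconn.preconnected.exists_adj_of_nontrivial x
  have hw : w ∈ W := by_contra fun hw => hindep x hx w ((hX w).2 hw) hxw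
  have hx'W : x' ∉ W := (hX x').1 hx'
  obtain ⟨L, hchain, hnd, hmem⟩ :=
    (hG x w hxw).exists_isChain_nodup_of_induce (b := x') ⟨hxx'.symm, fun h => hx'W (h ▸ hw)⟩
  have hcount : (x' :: L).countP (fun v => v ∉ W) + 1 ≤ X.ncard := by
    rw [List.countP_eq_length_filter]
    refine List.Nodup.length_le_ncard (l := x :: (x' :: L).filter (fun v => v ∉ W)) ?_ ?_ hXfin
    · exact List.nodup_cons.2
        ⟨fun h => ((hmem x).1 (List.mem_of_mem_filter h)).1 rfl, hnd.filter _⟩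
    · simp only [List.mem_cons, List.mem_filter, decide_eq_true_eq]
      rintro v (rfl | ⟨-, hvW⟩)
      exacts [hx, (hX v).2 hvW]
  have hWL : ∀ v ∈ W, v ≠ w → v ∈ x' :: L := fun v hv hvw =>
    (hmem v).2 ⟨fun h => (hX x).1 hx (h ▸ hv), hvw⟩
  calc pathCoverNumber (G.induce W)
      ≤ (x' :: L).countP (fun v => v ∉ W) + 1 :=
        pathCoverNumber_induce_le_countP_add_one G hchain hnd hx'W hw
          (fun h => ((hmem w).1 h).2 rfl) hWL
    _ < X.ncard + 1 := by omega

/-- Corollary. Let `G` be a connected `K₂`-hamiltonian graph and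
`(W, X)` a non-trivial partition of `V(G)` with `|X| > 1` such that `G[X]` contains no
two adjacent vertices. Then `p(G[W]) < |X| + 1`. -/
theorem nonAdj_pathCover_corollary (V : Type) [Fintype V] (G : SimpleGraph V)
    (hconn : G.Connected) (hG : IsK2Hamiltonian G) (W X : Set V)
    (hdisj : Disjoint W X) (hunion : W ∪ X = Set.univ)
    (hWne : W.Nonempty) (hXne : X.Nonempty) (hX1 : 1 < X.ncard)
    (hindep : ∀ v ∈ X, ∀ w ∈ X, ¬ G.Adj v w) :
    pathCoverNumber (G.induce W) < X.ncard + 1 :=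
  nonAdj_pathCover_corollary_general V G hconn hG W X hdisj hunion hWne hX1 hindep

end K2HypoPaper
end
end

section
/- Let G be a K₂-hamiltonian finite simple graph and (W,X) a non-trivial partition of V(G) such that W is an independent set. Suppose the induced subgraph G[X] contains two adjacent vertices v and w. Let n₁ be the number of vertices of X − v − w joined to exactly one vertex of W and n₂ the number of vertices of X − v − w joined to more than one vertex of W. Then 2n₂ + n₁ ≥ 2|W|. -/
/-! Let `C` be a hamiltonian cycle of `G - v - w`. Every vertex of `W` lies on `C`, and since `W`
is independent both of its neighbours on `C` lie in `X - v - w`. So `C` has exactly `2|W|` edges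
between `W` and `X - v - w`, while a vertex `x` of `X - v - w` lies on at most
`min 2 |N(x) ∩ W|` of them. -/

/- Definitions following "Generation and New Infinite Families of K₂-hypohamiltonian Graphs"
by Goedgebeur, Renders and Zamfirescu. -/

open scoped Classical

noncomputable section

namespace K2HypoPaper

variable {V : Type}

open SimpleGraph

lemma IsHamiltonianGraph.exists_subgraph_ncard_neighborSet_eq_two {G : SimpleGraph V} {S : Set V}
    (h : IsHamiltonianGraph (G.induce S)) :
    ∃ H : G.Subgraph, H.verts ⊆ S ∧ ∀ x ∈ S, (H.neighborSet x).ncard = 2 := by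
  obtain ⟨a, p, hp⟩ := h
  -- `hp` is stated with the classical `DecidableEq S` instance
  let _ : DecidableEq S := Classical.decEq S
  set q := p.map (Embedding.induce S).toHom
  have hq : q.IsCycle := hp.isCycle.map Subtype.val_injective
  refine ⟨q.toSubgraph, ?_, fun x hx => hq.ncard_neighborSet_toSubgraph_eq_two ?_⟩
  · rintro x hx
    rw [Walk.verts_toSubgraph, Set.mem_ofPred_eq, Walk.support_map, List.mem_map] at hx
    obtain ⟨y, -, rfl⟩ := hx
    exact y.2
  · rw [Walk.support_map, List.mem_map]
    exact ⟨⟨x, hx⟩, hp.mem_support _, rfl⟩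

lemma ncard_sep_eq_card_filter [Fintype V] (A : Set V) (p : V → Prop) :
    {x ∈ A | p x}.ncard = (A.toFinset.filter p).card := by
  rw [← Set.ncard_coe_finset]
  congr 1
  ext x
  simp

lemma two_mul_ncard_le_of_subgraph [Fintype V] {G : SimpleGraph V} (H : G.Subgraph)
    {W A : Set V} (hA : ∀ x ∈ A, (H.neighborSet x).ncard ≤ 2)
    (hW : ∀ u ∈ W, 2 ≤ (H.neighborSet u).ncard) (hWA : ∀ u ∈ W, H.neighborSet u ⊆ A) :
    2 * W.ncard ≤ 2 * {x ∈ A | 1 < {y ∈ W | G.Adj x y}.ncard}.ncard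
      + {x ∈ A | {y ∈ W | G.Adj x y}.ncard = 1}.ncard := by
  set k : V → ℕ := fun x => {y ∈ W | G.Adj x y}.ncard
  have hbelow : ∀ x ∈ A, (W.toFinset.bipartiteBelow H.Adj x).card ≤
      (if 1 < k x then 2 else 0) + (if k x = 1 then 1 else 0) := by
    intro x hx
    have hcard : (W.toFinset.bipartiteBelow H.Adj x).card = {y ∈ W | H.Adj x y}.ncard := by
      rw [ncard_sep_eq_card_filter]
      simp only [Finset.bipartiteBelow, H.adj_comm]
    have hH : {y ∈ W | H.Adj x y}.ncard ≤ 2 :=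
      (Set.ncard_le_ncard (fun y hy => hy.2)).trans (hA x hx)
    have hG : {y ∈ W | H.Adj x y}.ncard ≤ k x :=
      Set.ncard_le_ncard (fun y hy => ⟨hy.1, hy.2.adj_sub⟩)
    rw [hcard]
    split_ifs <;> omega
  have habove : ∀ u ∈ W, 2 ≤ (A.toFinset.bipartiteAbove H.Adj u).card := by
    intro u hu
    have : (A.toFinset.bipartiteAbove H.Adj u).card = (H.neighborSet u).ncard := by
      rw [← Set.ncard_coe_finset]
      congr 1
      ext y
      simpa [Finset.bipartiteAbove] using fun h => hWA u hu h
    exact this ▸ hW u hu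
  calc 2 * W.ncard = ∑ _u ∈ W.toFinset, 2 := by
        rw [Finset.sum_const, smul_eq_mul, mul_comm, Set.ncard_eq_toFinset_card']
    _ ≤ ∑ u ∈ W.toFinset, (A.toFinset.bipartiteAbove H.Adj u).card :=
        Finset.sum_le_sum fun u hu => habove u (Set.mem_toFinset.mp hu)
    _ = ∑ x ∈ A.toFinset, (W.toFinset.bipartiteBelow H.Adj x).card :=
        Finset.sum_card_bipartiteAbove_eq_sum_card_bipartiteBelow _
    _ ≤ ∑ x ∈ A.toFinset, ((if 1 < k x then 2 else 0) + (if k x = 1 then 1 else 0)) :=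
        Finset.sum_le_sum fun x hx => hbelow x (Set.mem_toFinset.mp hx)
    _ = _ := by
        rw [Finset.sum_add_distrib, ← Finset.sum_filter, ← Finset.sum_filter, Finset.sum_const,
          Finset.sum_const, smul_eq_mul, smul_eq_mul, ncard_sep_eq_card_filter,
          ncard_sep_eq_card_filter, mul_comm, mul_one]
        -- the two sides differ only in their `DecidablePred` instances
        convert rfl

theorem typeC_obstruction_general (V : Type) [Fintype V] (G : SimpleGraph V)
    (hG : IsK2Hamiltonian G) (W X : Set V)
    (hdisj : Disjoint W X) (hunion : W ∪ X = Set.univ)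
    (hindep : ∀ u ∈ W, ∀ u' ∈ W, ¬ G.Adj u u')
    (v w : V) (hv : v ∈ X) (hw : w ∈ X) (hvw : G.Adj v w) :
    2 * {x ∈ X \ {v, w} | 1 < {y ∈ W | G.Adj x y}.ncard}.ncard
      + {x ∈ X \ {v, w} | {y ∈ W | G.Adj x y}.ncard = 1}.ncard
      ≥ 2 * W.ncard := by
  obtain ⟨H, hHS, hdeg⟩ := (hG v w hvw).exists_subgraph_ncard_neighborSet_eq_two
  have hXS : X \ {v, w} ⊆ {x | x ≠ v ∧ x ≠ w} := fun x hx => by simpa using hx.2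
  have hWS : W ⊆ {x | x ≠ v ∧ x ≠ w} := fun u hu =>
    ⟨fun h => hdisj.notMem_of_mem_left hu (h ▸ hv), fun h => hdisj.notMem_of_mem_left hu (h ▸ hw)⟩
  refine two_mul_ncard_le_of_subgraph H (fun x hx => (hdeg x (hXS hx)).le)
    (fun u hu => (hdeg u (hWS hu)).ge) fun u hu y hy => ⟨?_, ?_⟩
  · have hyW : y ∉ W := fun hyW => hindep u hu y hyW (H.adj_sub hy)
    simpa [hyW] using hunion.ge (Set.mem_univ y)
  · simpa using hHS (H.edge_vert hy.symm)

/-- Lemma: type C obstruction. Let `G` be a `K₂`-hamiltonian graph and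
`(W, X)` a non-trivial partition of `V(G)` such that `W` is an independent set. Suppose
`G[X]` contains adjacent vertices `v` and `w`. Let `n₁` (resp. `n₂`) be the number of
vertices of `X − v − w` joined to exactly one (resp. more than one) vertex of `W`.
Then `2 n₂ + n₁ ≥ 2 |W|`. -/
theorem typeC_obstruction (V : Type) [Fintype V] (G : SimpleGraph V)
    (hG : IsK2Hamiltonian G) (W X : Set V)
    (hdisj : Disjoint W X) (hunion : W ∪ X = Set.univ)
    (hWne : W.Nonempty) (hXne : X.Nonempty)
    (hindep : ∀ u ∈ W, ∀ u' ∈ W, ¬ G.Adj u u')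
    (v w : V) (hv : v ∈ X) (hw : w ∈ X) (hvw : G.Adj v w) :
    2 * {x ∈ X \ {v, w} | 1 < {y ∈ W | G.Adj x y}.ncard}.ncard
      + {x ∈ X \ {v, w} | {y ∈ W | G.Adj x y}.ncard = 1}.ncard
      ≥ 2 * W.ncard :=
  typeC_obstruction_general V G hG W X hdisj hunion hindep v w hv hw hvw

end K2HypoPaper
end
end

section
/- Let G be a K₂-hypohamiltonian finite simple graph containing a triangle on vertices u, v, w. Then u has at least two neighbours lying outside N[v] ∪ N[w]. -/
/- Definitions following "Generation and New Infinite Families of K₂-hypohamiltonian Graphs"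
by Goedgebeur, Renders and Zamfirescu. -/

open scoped Classical

noncomputable section

namespace K2HypoPaper

variable {V : Type}

/-- `N[v]`: the closed neighbourhood of `v` in `G`, i.e. `v` together with all its
neighbours. -/
def closedNbhd (G : SimpleGraph V) (v : V) : Set V :=
  insert v (G.neighborSet v)


/-!
Let `C` be a Hamiltonian cycle of `G - v - w` and `a` a neighbour of `u` on `C`. If `a` were
adjacent to `v`, replacing the edge `ua` of `C` by the path `u w v a` would give a Hamiltonian
cycle of `G`; symmetrically for `w`. So both neighbours of `u` on `C` lie outside
`N[v] ∪ N[w]`, and they are distinct because `C` has length at least three.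
-/

end K2HypoPaper

namespace SimpleGraph.Walk

variable {α : Type*} [DecidableEq α] {G : SimpleGraph α}

lemma IsHamiltonianCycle.reverse {a : α} {p : G.Walk a a} (hp : p.IsHamiltonianCycle) :
    p.reverse.IsHamiltonianCycle := by
  have := hp.finite
  cases nonempty_fintype α
  rw [isHamiltonianCycle_iff_isCycle_and_length_eq] at hp ⊢
  exact ⟨hp.1.reverse, by rw [length_reverse, hp.2]⟩

lemma IsPath.isHamiltonianCycle_cons_cons_cons {u v w a : α} {q : G.Walk a u} (hq : q.IsPath)
    (hv : v ∉ q.support) (hw : w ∉ q.support) (hvw : v ≠ w)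
    (hcover : ∀ x, x ≠ v → x ≠ w → x ∈ q.support)
    (huw : G.Adj u w) (hwv : G.Adj w v) (hva : G.Adj v a) :
    (cons huw (cons hwv (cons hva q))).IsHamiltonianCycle := by
  have hpath : (cons hwv (cons hva q)).IsPath := by
    simp only [cons_isPath_iff, support_cons, List.mem_cons, not_or]
    exact ⟨⟨hq, hv⟩, hvw.symm, hw⟩
  have hmem : ∀ x, x ∈ (cons hwv (cons hva q)).support := by
    intro x
    by_cases hxv : x = v
    · simp [hxv]
    by_cases hxw : x = w
    · simp [hxw]
    simp [hcover x hxv hxw]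
  refine ⟨isCycle_iff_isPath_tail_and_le_length.mpr ⟨by simpa using hpath, by simp⟩, ?_⟩
  simpa [IsHamiltonian] using hpath.isHamiltonian_of_mem hmem

end SimpleGraph.Walk

namespace K2HypoPaper

open SimpleGraph Walk

lemma IsHamiltonianGraph.exists_isHamiltonianCycle [DecidableEq V] {G : SimpleGraph V}
    (hG : IsHamiltonianGraph G) (x : V) : ∃ p : G.Walk x x, p.IsHamiltonianCycle := by
  obtain ⟨_, p, hp⟩ := hG
  -- `hp` carries the classical `DecidableEq` instance fixed in `IsHamiltonianGraph`.
  replace hp : p.IsHamiltonianCycle := by convert hp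
  exact ⟨p.rotate x (hp.mem_support x), hp.rotate _⟩

lemma not_adj_snd_of_isHamiltonianCycle_induce {G : SimpleGraph V} {S : Set V} {v w : V}
    (hG : ¬ IsHamiltonianGraph G) (hS : ∀ x, x ∉ S ↔ x = v ∨ x = w) (hvw : v ≠ w) {u : S}
    {c : (G.induce S).Walk u u} (hc : c.IsHamiltonianCycle) (huw : G.Adj u w)
    (hwv : G.Adj w v) : ¬ G.Adj v c.snd := by
  intro hva
  set q := c.tail.map (Embedding.induce S).toHom
  have hsupp : q.support = c.tail.support.map Subtype.val := support_map _ _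
  have hq : q.IsPath := hc.isCycle.isPath_tail.map Subtype.val_injective
  have hnotMem : ∀ x ∉ S, x ∉ q.support := by
    rintro x hx hmem
    obtain ⟨y, -, rfl⟩ := List.mem_map.mp (hsupp ▸ hmem)
    exact hx y.2
  have hcover : ∀ x, x ≠ v → x ≠ w → x ∈ q.support := by
    intro x hxv hxw
    have hxS : x ∈ S := by by_contra h; exact ((hS x).mp h).elim hxv hxw
    rw [hsupp]
    exact List.mem_map_of_mem (hc.isHamiltonian_tail.mem_support ⟨x, hxS⟩)
  exact hG ⟨u, _, hq.isHamiltonianCycle_cons_cons_cons (hnotMem v ((hS v).mpr (.inl rfl)))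
    (hnotMem w ((hS w).mpr (.inr rfl))) hvw hcover huw hwv hva⟩

lemma snd_notMem_closedNbhd_union {G : SimpleGraph V} {v w : V} (hG : ¬ IsHamiltonianGraph G)
    (hvw : G.Adj v w) {u : {x | x ≠ v ∧ x ≠ w}} (huv : G.Adj u v) (huw : G.Adj u w)
    {c : (G.induce {x | x ≠ v ∧ x ≠ w}).Walk u u} (hc : c.IsHamiltonianCycle) :
    (c.snd : V) ∉ closedNbhd G v ∪ closedNbhd G w := by
  have hS : ∀ x, x ∉ {x | x ≠ v ∧ x ≠ w} ↔ x = v ∨ x = w := fun x => by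
    simp only [Set.mem_ofPred_eq, not_and_or, not_not]
  have hS' : ∀ x, x ∉ {x | x ≠ v ∧ x ≠ w} ↔ x = w ∨ x = v := fun x => (hS x).trans or_comm
  simp only [closedNbhd, Set.mem_union, Set.mem_insert_iff, mem_neighborSet, not_or]
  exact ⟨⟨(c.snd).2.1, not_adj_snd_of_isHamiltonianCycle_induce hG hS (G.ne_of_adj hvw) hc huw
    hvw.symm⟩, ⟨(c.snd).2.2, not_adj_snd_of_isHamiltonianCycle_induce hG hS'
    (G.ne_of_adj hvw).symm hc huv hvw⟩⟩

/-- triangle obstruction lemma. Let `G` be a `K₂`-hypohamiltonian graph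
containing a triangle `uvw`. Then `u` has at least two neighbours not in `N[v] ∪ N[w]`. -/
theorem triangle_obstruction (V : Type) [Fintype V] (G : SimpleGraph V)
    (hG : IsK2Hypohamiltonian G) (u v w : V)
    (huv : G.Adj u v) (hvw : G.Adj v w) (huw : G.Adj u w) :
    2 ≤ (G.neighborSet u \ (closedNbhd G v ∪ closedNbhd G w)).ncard := by
  obtain ⟨hnh, hk2⟩ := hG
  obtain ⟨c, hc⟩ := (hk2 v w hvw).exists_isHamiltonianCycle ⟨u, G.ne_of_adj huv, G.ne_of_adj huw⟩
  refine (Set.one_lt_ncard_iff).mpr ⟨c.snd, c.reverse.snd,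
    ⟨adj_snd hc.not_nil, snd_notMem_closedNbhd_union hnh hvw huv huw hc⟩,
    ⟨adj_snd hc.reverse.not_nil, snd_notMem_closedNbhd_union hnh hvw huv huw hc.reverse⟩, ?_⟩
  rw [snd_reverse]
  exact Subtype.val_injective.ne hc.isCycle.snd_ne_penultimate

end K2HypoPaper
end
end

section
/- Let G be a K₂-hypohamiltonian finite simple graph. Then every vertex lying on a triangle of G has degree at least 4 in G. -/
/- Definitions following "Generation and New Infinite Families of K₂-hypohamiltonian Graphs"
by Goedgebeur, Renders and Zamfirescu. -/

open scoped Classical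

noncomputable section

namespace K2HypoPaper

variable {V : Type}

/-!
If `u v w` is a triangle, the graph `G - v - w` is hamiltonian, and `u` has two distinct
neighbours on its hamiltonian cycle. Together with `v` and `w` they are four distinct neighbours
of `u` in `G`. A hamiltonian cycle also forces the vertex type to be finite, which the count by
`Set.ncard` needs (it is `0` on infinite sets).
-/

section
variable {G : SimpleGraph V}

lemma IsHamiltonianGraph.finite (hG : IsHamiltonianGraph G) : Finite V :=
  hG.choose_spec.choose_spec.finite

lemma IsHamiltonianGraph.exists_adj_adj_ne (hG : IsHamiltonianGraph G) (x : V) :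
    ∃ a b, a ≠ b ∧ G.Adj x a ∧ G.Adj x b := by
  obtain ⟨c, p, hp⟩ := hG
  have hq := hp.isCycle.rotate (hp.mem_support x)
  exact ⟨_, _, hq.snd_ne_penultimate, SimpleGraph.Walk.adj_snd hq.not_nil,
    (SimpleGraph.Walk.adj_penultimate hq.not_nil).symm⟩

lemma IsK2Hamiltonian.finite (hG : IsK2Hamiltonian G) {u v : V} (huv : G.Adj u v) :
    Finite V := by
  have := (hG u v huv).finite
  refine Set.finite_univ_iff.mp (((Set.toFinite {x : V | x ≠ u ∧ x ≠ v}).union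
    (Set.toFinite {u, v})).subset fun x _ => ?_)
  simp only [Set.mem_union, Set.mem_ofPred_eq, Set.mem_insert_iff, Set.mem_singleton_iff]
  tauto

lemma IsK2Hamiltonian.four_le_ncard_neighborSet (hG : IsK2Hamiltonian G) {u v w : V}
    (huv : G.Adj u v) (huw : G.Adj u w) (hvw : G.Adj v w) :
    4 ≤ (G.neighborSet u).ncard := by
  have := hG.finite huv
  obtain ⟨a, b, hab, ha, hb⟩ := (hG v w hvw).exists_adj_adj_ne ⟨u, huv.ne, huw.ne⟩
  have hdisj : Disjoint ({v, w} : Set V) {↑a, ↑b} := by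
    obtain ⟨ha', hb'⟩ := And.intro a.2 b.2
    simp_all [eq_comm]
  calc 4 = ({v, w} ∪ {↑a, ↑b} : Set V).ncard := by
        rw [Set.ncard_union_eq hdisj, Set.ncard_pair hvw.ne,
          Set.ncard_pair (Subtype.coe_ne_coe.mpr hab)]
    _ ≤ (G.neighborSet u).ncard := Set.ncard_le_ncard <| by
        simp [Set.insert_subset_iff, huv, huw, SimpleGraph.induce_adj.mp ha,
          SimpleGraph.induce_adj.mp hb]

end

theorem triangle_degree_general (V : Type) (G : SimpleGraph V)
    (hG : IsK2Hypohamiltonian G) (u v w : V)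
    (huv : G.Adj u v) (hvw : G.Adj v w) (huw : G.Adj u w) :
    4 ≤ (G.neighborSet u).ncard ∧ 4 ≤ (G.neighborSet v).ncard ∧
      4 ≤ (G.neighborSet w).ncard :=
  ⟨hG.2.four_le_ncard_neighborSet huv huw hvw,
    hG.2.four_le_ncard_neighborSet huv.symm hvw huw,
    hG.2.four_le_ncard_neighborSet hvw.symm huw.symm huv.symm⟩

/-- Corollary. In a `K₂`-hypohamiltonian graph, the vertices of a
triangle have degree at least `4`. -/
theorem triangle_degree (V : Type) [Fintype V] (G : SimpleGraph V)
    (hG : IsK2Hypohamiltonian G) (u v w : V)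
    (huv : G.Adj u v) (hvw : G.Adj v w) (huw : G.Adj u w) :
    4 ≤ (G.neighborSet u).ncard ∧ 4 ≤ (G.neighborSet v).ncard ∧
      4 ≤ (G.neighborSet w).ncard :=
  triangle_degree_general V G hG u v w huv hvw huw

end K2HypoPaper
end
end
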